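/- arXiv:2011.04363 — 4 statements merged into one kernel-verified Lean document; each statement's English description precedes it below -/
import Mathlib

section
/- If f : F → f(F) ⊆ ℝᵐ is a bi-Lipschitz bijection of a bounded set F ⊆ ℝⁿ, then for all θ ∈ [0,1] the lower θ-intermediate dimensions of F and f(F) agree, and the upper θ-intermediate dimensions of F and f(F) agree. -/
open Set Metric MeasureTheory ENNReal

/-- A cover of `F` witnessing the `θ`-intermediate dimension sum condition at scale `δ`:
a countable cover by sets of diameter between `δ^(1/θ)` and `δ` whose `s`-power diameter
sum is at most `ε`.  (When `θ = 0` the lower bound on diameters is vacuous, recovering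
the Hausdorff dimension condition.) -/
def interCoverSum {X : Type*} [PseudoMetricSpace X]
    (θ δ s ε : ℝ) (F : Set X) : Prop :=
  ∃ 𝒰 : Set (Set X), 𝒰.Countable ∧ F ⊆ ⋃₀ 𝒰 ∧
    (∀ U ∈ 𝒰, EMetric.diam U ≤ ENNReal.ofReal δ ∧
      (θ ≠ 0 → ENNReal.ofReal (δ ^ (1 / θ)) ≤ EMetric.diam U)) ∧
    ∑' U : 𝒰, EMetric.diam (U : Set X) ^ s ≤ ENNReal.ofReal ε

/-- The lower `θ`-intermediate dimension of `F`. -/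
noncomputable def lowerInterDim {X : Type*} [PseudoMetricSpace X] (θ : ℝ) (F : Set X) : ℝ :=
  sInf {s : ℝ | 0 ≤ s ∧ ∀ ε > 0, ∀ δ₀ > 0, ∃ δ, 0 < δ ∧ δ ≤ δ₀ ∧ interCoverSum θ δ s ε F}

/-- The upper `θ`-intermediate dimension of `F`. -/
noncomputable def upperInterDim {X : Type*} [PseudoMetricSpace X] (θ : ℝ) (F : Set X) : ℝ :=
  sInf {s : ℝ | 0 ≤ s ∧ ∀ ε > 0, ∃ δ₀ > 0, ∀ δ, 0 < δ → δ ≤ δ₀ → interCoverSum θ δ s ε F}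

/-- Lower box-counting dimension: the `θ = 1` lower intermediate dimension, i.e. covers
by sets all of the same diameter. -/
noncomputable def lowerBoxDim {X : Type*} [PseudoMetricSpace X] (F : Set X) : ℝ :=
  lowerInterDim 1 F

/-- Upper box-counting dimension: the `θ = 1` upper intermediate dimension. -/
noncomputable def upperBoxDim {X : Type*} [PseudoMetricSpace X] (F : Set X) : ℝ :=
  upperInterDim 1 F

/-!
A `K`-Lipschitz image of a cover at scale `δ` is a cover at the comparable scale `L δ`,
`L = 2K + 1`, whose diameters grow by at most the factor `K`. The only subtlety is the lower
bound `(L δ)^(1/θ)` on diameters, which the image pieces may violate: each piece is enlarged by a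
ball of diameter `(L δ)^(1/θ) = L^(1/θ) δ^(1/θ)`, which costs a constant factor because the
original piece already had diameter at least `δ^(1/θ)`. Applied to `f` and to its inverse on
`f '' F`, this shows that `F` and `f '' F` have the same admissible exponents. A subsingleton has
both dimensions `0` in any space: either every exponent `s > 0` is admissible, or none is and
`sInf ∅ = 0`.
-/

open Function
open scoped NNReal

lemma Real.sInf_eq_zero_of_subset_Ici {S : Set ℝ} (hS : S ⊆ Ici 0)
    (hpos : S.Nonempty → Ioi 0 ⊆ S) : sInf S = 0 := by
  rcases S.eq_empty_or_nonempty with rfl | hne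
  · exact Real.sInf_empty
  refine le_antisymm ?_ (Real.sInf_nonneg hS)
  calc sInf S ≤ sInf (Ioi (0 : ℝ)) := csInf_le_csInf ⟨0, hS⟩ nonempty_Ioi (hpos hne)
    _ = 0 := csInf_Ioi

section PseudoMetric

variable {X : Type*} [PseudoMetricSpace X] {θ δ s ε : ℝ} {F : Set X}

def lowerInterDimSet (θ : ℝ) (F : Set X) : Set ℝ :=
  {s : ℝ | 0 ≤ s ∧ ∀ ε > 0, ∀ δ₀ > 0, ∃ δ, 0 < δ ∧ δ ≤ δ₀ ∧ interCoverSum θ δ s ε F}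

def upperInterDimSet (θ : ℝ) (F : Set X) : Set ℝ :=
  {s : ℝ | 0 ≤ s ∧ ∀ ε > 0, ∃ δ₀ > 0, ∀ δ, 0 < δ → δ ≤ δ₀ → interCoverSum θ δ s ε F}

lemma interCoverSum.of_subsingleton {s' ε' : ℝ} (h : interCoverSum θ δ s' ε' F)
    (hF : F.Subsingleton) (hs : 0 < s) (hε : 0 ≤ ε) (hδ : δ ≤ ε ^ s⁻¹) :
    interCoverSum θ δ s ε F := by
  rcases hF.eq_empty_or_singleton with rfl | ⟨x, rfl⟩
  · exact ⟨∅, countable_empty, empty_subset _, by simp, by simp⟩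
  obtain ⟨𝒰, -, hcover, hdiam, -⟩ := h
  obtain ⟨U, hU, hxU⟩ := hcover (mem_singleton x)
  refine ⟨{U}, countable_singleton U, by simpa using hxU, by simpa using hdiam U hU, ?_⟩
  refine (tsum_singleton U fun V => ediam V ^ s).trans_le ?_
  calc ediam U ^ s ≤ ENNReal.ofReal (ε ^ s⁻¹) ^ s :=
        ENNReal.rpow_le_rpow ((hdiam U hU).1.trans (ENNReal.ofReal_le_ofReal hδ)) hs.le
    _ = ENNReal.ofReal ε := by
        rw [ENNReal.ofReal_rpow_of_nonneg (by positivity) hs.le, Real.rpow_inv_rpow hε hs.ne']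

lemma Set.Subsingleton.lowerInterDim_eq_zero (hF : F.Subsingleton) (θ : ℝ) :
    lowerInterDim θ F = 0 := by
  refine Real.sInf_eq_zero_of_subset_Ici (S := lowerInterDimSet θ F) (fun s hs => hs.1) ?_
  rintro ⟨s₀, -, hs₀⟩ s hs
  refine ⟨(mem_Ioi.1 hs).le, fun ε hε δ₀ hδ₀ => ?_⟩
  obtain ⟨δ, hδ, hδle, hcov⟩ := hs₀ 1 one_pos (min δ₀ (ε ^ s⁻¹)) (by positivity)
  exact ⟨δ, hδ, hδle.trans (min_le_left _ _),
    hcov.of_subsingleton hF hs hε.le (hδle.trans (min_le_right _ _))⟩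

lemma Set.Subsingleton.upperInterDim_eq_zero (hF : F.Subsingleton) (θ : ℝ) :
    upperInterDim θ F = 0 := by
  refine Real.sInf_eq_zero_of_subset_Ici (S := upperInterDimSet θ F) (fun s hs => hs.1) ?_
  rintro ⟨s₀, -, hs₀⟩ s hs
  refine ⟨(mem_Ioi.1 hs).le, fun ε hε => ?_⟩
  obtain ⟨δ₀, hδ₀, hcov⟩ := hs₀ 1 one_pos
  refine ⟨min δ₀ (ε ^ s⁻¹), by positivity, fun δ hδ hδle => ?_⟩
  exact (hcov δ hδ (hδle.trans (min_le_left _ _))).of_subsingleton hF hs hε.le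
    (hδle.trans (min_le_right _ _))

end PseudoMetric

lemma ediam_le_ofReal_of_subset_closedBall {X : Type*} [PseudoMetricSpace X] {A : Set X} {y : X}
    {r : ℝ} (h : A ⊆ closedBall y (r / 2)) : ediam A ≤ ENNReal.ofReal r :=
  ediam_le_of_forall_dist_le fun u hu v hv => (dist_triangle_right u v y).trans <| by
    linarith [mem_closedBall.1 (h hu), mem_closedBall.1 (h hv)]

lemma exists_superset_ofReal_le_ediam {Y : Type*} [NormedAddCommGroup Y] [NormedSpace ℝ Y]
    [Nontrivial Y] {A : Set Y} {y : Y} {a b : ℝ} (ha : 0 ≤ a) (hab : a ≤ b) (hy : y ∈ A)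
    (hA : A ⊆ closedBall y (b / 2)) :
    ∃ V, A ⊆ V ∧ ENNReal.ofReal a ≤ ediam V ∧ ediam V ≤ ENNReal.ofReal b ∧
      ediam V ≤ ediam A + ENNReal.ofReal a := by
  refine ⟨A ∪ closedBall y (a / 2), subset_union_left, ?_, ?_, ?_⟩
  · calc ENNReal.ofReal a = ENNReal.ofReal (diam (closedBall y (a / 2))) := by
          rw [diam_closedBall_eq y (by positivity), mul_div_cancel₀ a two_ne_zero]
      _ ≤ ediam (closedBall y (a / 2)) := ENNReal.ofReal_toReal_le
      _ ≤ _ := ediam_mono subset_union_right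
  · exact ediam_le_ofReal_of_subset_closedBall <|
      union_subset hA (closedBall_subset_closedBall (by linarith))
  · calc ediam (A ∪ closedBall y (a / 2)) ≤ ediam A + ediam (closedBall y (a / 2)) :=
          ediam_union_le ⟨y, hy, mem_closedBall_self (by positivity)⟩
      _ ≤ ediam A + ENNReal.ofReal a := by
          gcongr; exact ediam_le_ofReal_of_subset_closedBall subset_rfl

lemma lipschitzOnWith_invFunOn {X Y : Type*} [PseudoMetricSpace X] [PseudoMetricSpace Y]
    [Nonempty X] {f : X → Y} {F : Set X} {c : ℝ} (hc : 0 < c)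
    (hf : ∀ x ∈ F, ∀ y ∈ F, c * dist x y ≤ dist (f x) (f y)) :
    LipschitzOnWith (Real.toNNReal c⁻¹) (invFunOn f F) (f '' F) := by
  refine LipschitzOnWith.of_dist_le_mul ?_
  rintro _ ⟨x, hx, rfl⟩ _ ⟨y, hy, rfl⟩
  have h := hf _ (invFunOn_apply_mem (f := f) hx) _ (invFunOn_apply_mem (f := f) hy)
  rw [invFunOn_apply_eq (f := f) hx, invFunOn_apply_eq (f := f) hy] at h
  rwa [Real.coe_toNNReal _ (inv_nonneg.2 hc.le), inv_mul_eq_div, le_div_iff₀' hc]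

section Lipschitz

variable {X Y : Type*} [PseudoMetricSpace X] [NormedAddCommGroup Y] [NormedSpace ℝ Y]
  [Nontrivial Y] {K : ℝ≥0} {g : X → Y} {F : Set X} {θ δ s ε : ℝ}

lemma LipschitzOnWith.exists_interCover_piece (hg : LipschitzOnWith K g F)
    (hθ : θ ∈ Icc (0 : ℝ) 1) (hδ : 0 < δ) (hδ1 : (2 * K + 1) * δ ≤ 1) {U : Set X}
    (hUF : (U ∩ F).Nonempty) (hU : ediam U ≤ ENNReal.ofReal δ)
    (hU' : θ ≠ 0 → ENNReal.ofReal (δ ^ (1 / θ)) ≤ ediam U) :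
    ∃ V, g '' (U ∩ F) ⊆ V ∧ (ediam V ≤ ENNReal.ofReal ((2 * K + 1) * δ) ∧
      (θ ≠ 0 → ENNReal.ofReal (((2 * K + 1) * δ) ^ (1 / θ)) ≤ ediam V)) ∧
      ediam V ≤ ENNReal.ofReal (K + (2 * K + 1) ^ (1 / θ)) * ediam U := by
  set L : ℝ := 2 * K + 1
  have hL : 0 < L := by positivity
  obtain ⟨x, hxU, hxF⟩ := hUF
  have hA : g '' (U ∩ F) ⊆ closedBall (g x) (L * δ / 2) := by
    rintro _ ⟨u, hu, rfl⟩
    have hux : dist u x ≤ δ :=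
      (edist_le_ofReal hδ.le).1 ((edist_le_ediam_of_mem hu.1 hxU).trans hU)
    calc dist (g u) (g x) ≤ K * dist u x := hg.dist_le_mul u hu.2 x hxF
      _ ≤ K * δ := by gcongr
      _ ≤ L * δ / 2 := by nlinarith
  set a : ℝ := if θ = 0 then 0 else (L * δ) ^ (1 / θ)
  have ha : 0 ≤ a := by unfold a; split_ifs <;> positivity
  have haL : a ≤ L * δ := by
    unfold a; split_ifs with hθ0
    · positivity
    · calc (L * δ) ^ (1 / θ) ≤ (L * δ) ^ (1 : ℝ) :=
            Real.rpow_le_rpow_of_exponent_ge (by positivity) hδ1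
              (one_le_one_div (lt_of_le_of_ne hθ.1 (Ne.symm hθ0)) hθ.2)
        _ = L * δ := Real.rpow_one _
  obtain ⟨V, hAV, haV, hVL, hVA⟩ :=
    exists_superset_ofReal_le_ediam (A := g '' (U ∩ F)) ha haL ⟨x, ⟨hxU, hxF⟩, rfl⟩ hA
  refine ⟨V, hAV, ⟨hVL, fun hθ0 => by simpa [a, hθ0] using haV⟩, ?_⟩
  have himage : ediam (g '' (U ∩ F)) ≤ K * ediam U := ediam_image_le_iff.2
    fun u hu v hv => hg.edist_le_mul_of_le hu.2 hv.2 (edist_le_ediam_of_mem hu.1 hv.1)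
  have ha_le : ENNReal.ofReal a ≤ ENNReal.ofReal (L ^ (1 / θ)) * ediam U := by
    unfold a; split_ifs with hθ0
    · simp
    · rw [Real.mul_rpow hL.le hδ.le, ENNReal.ofReal_mul (by positivity)]
      gcongr
      exact hU' hθ0
  calc ediam V ≤ ediam (g '' (U ∩ F)) + ENNReal.ofReal a := hVA
    _ ≤ K * ediam U + ENNReal.ofReal (L ^ (1 / θ)) * ediam U := add_le_add himage ha_le
    _ = ENNReal.ofReal (K + L ^ (1 / θ)) * ediam U := by
      rw [← add_mul, ENNReal.ofReal_add K.coe_nonneg (by positivity), ENNReal.ofReal_coe_nnreal]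

lemma interCoverSum.image_of_lipschitzOnWith (hg : LipschitzOnWith K g F)
    (hθ : θ ∈ Icc (0 : ℝ) 1) (hs : 0 ≤ s) (hδ : 0 < δ) (hδ1 : (2 * K + 1) * δ ≤ 1)
    (h : interCoverSum θ δ s ε F) :
    interCoverSum θ ((2 * K + 1) * δ) s ((K + (2 * K + 1) ^ (1 / θ)) ^ s * ε) (g '' F) := by
  set C : ℝ := K + (2 * K + 1) ^ (1 / θ)
  obtain ⟨𝒰, h𝒰, hcover, hdiam, hsum⟩ := h
  set 𝒰' := {U ∈ 𝒰 | (U ∩ F).Nonempty}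
  have : Countable 𝒰' := (h𝒰.mono (sep_subset _ _)).to_subtype
  choose V hUV hVdiam hVU using fun U : 𝒰' =>
    hg.exists_interCover_piece hθ hδ hδ1 U.2.2 (hdiam U U.2.1).1 (hdiam U U.2.1).2
  refine ⟨range V, countable_range V, ?_, forall_mem_range.2 hVdiam, ?_⟩
  · rintro _ ⟨x, hx, rfl⟩
    obtain ⟨U, hU, hxU⟩ := hcover hx
    exact mem_sUnion_of_mem (hUV ⟨U, hU, x, hxU, hx⟩ ⟨x, ⟨hxU, hx⟩, rfl⟩) (mem_range_self _)
  calc ∑' W : range V, ediam (W : Set Y) ^ s ≤ ∑' U : 𝒰', ediam (V U) ^ s :=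
        ENNReal.tsum_le_tsum_comp_of_surjective rangeFactorization_surjective _
    _ ≤ ∑' U : 𝒰', (ENNReal.ofReal C * ediam (U : Set X)) ^ s :=
        ENNReal.tsum_le_tsum fun U => ENNReal.rpow_le_rpow (hVU U) hs
    _ ≤ ∑' U : 𝒰, (ENNReal.ofReal C * ediam (U : Set X)) ^ s :=
        ENNReal.tsum_mono_subtype (fun U => (ENNReal.ofReal C * ediam U) ^ s) (sep_subset _ _)
    _ = ENNReal.ofReal C ^ s * ∑' U : 𝒰, ediam (U : Set X) ^ s := by
        simp_rw [ENNReal.mul_rpow_of_nonneg _ _ hs, ENNReal.tsum_mul_left]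
    _ ≤ ENNReal.ofReal C ^ s * ENNReal.ofReal ε := by gcongr; exact hsum
    _ = ENNReal.ofReal (C ^ s * ε) := by
        rw [ENNReal.ofReal_rpow_of_nonneg (by positivity) hs, ENNReal.ofReal_mul (by positivity)]

lemma lowerInterDimSet_subset_image (hg : LipschitzOnWith K g F) (hθ : θ ∈ Icc (0 : ℝ) 1) :
    lowerInterDimSet θ F ⊆ lowerInterDimSet θ (g '' F) := by
  rintro s ⟨hs, h⟩
  refine ⟨hs, fun ε hε δ₀ hδ₀ => ?_⟩
  set L : ℝ := 2 * K + 1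
  have hL : 0 < L := by positivity
  have hC : 0 < (K + L ^ (1 / θ)) ^ s := by positivity
  obtain ⟨δ, hδ, hδle, hcov⟩ := h (ε / (K + L ^ (1 / θ)) ^ s) (by positivity) (min δ₀ 1 / L)
    (by positivity)
  have hLδ : L * δ ≤ min δ₀ 1 := by rwa [le_div_iff₀' hL] at hδle
  refine ⟨L * δ, by positivity, hLδ.trans (min_le_left _ _), ?_⟩
  have := hcov.image_of_lipschitzOnWith hg hθ hs hδ (hLδ.trans (min_le_right _ _))
  rwa [mul_div_cancel₀ _ hC.ne'] at this

lemma upperInterDimSet_subset_image (hg : LipschitzOnWith K g F) (hθ : θ ∈ Icc (0 : ℝ) 1) :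
    upperInterDimSet θ F ⊆ upperInterDimSet θ (g '' F) := by
  rintro s ⟨hs, h⟩
  refine ⟨hs, fun ε hε => ?_⟩
  set L : ℝ := 2 * K + 1
  have hL : 0 < L := by positivity
  have hC : 0 < (K + L ^ (1 / θ)) ^ s := by positivity
  obtain ⟨δ₀, hδ₀, hcov⟩ := h (ε / (K + L ^ (1 / θ)) ^ s) (by positivity)
  refine ⟨min (L * δ₀) 1, by positivity, fun δ hδ hδle => ?_⟩
  have hδL : δ / L ≤ δ₀ := by
    rw [div_le_iff₀' hL]; exact hδle.trans (min_le_left _ _)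
  have := (hcov (δ / L) (by positivity) hδL).image_of_lipschitzOnWith hg hθ hs (by positivity)
    (by rw [mul_div_cancel₀ _ hL.ne']; exact hδle.trans (min_le_right _ _))
  rwa [mul_div_cancel₀ _ hL.ne', mul_div_cancel₀ _ hC.ne'] at this

end Lipschitz

theorem stmt5_general (n m : ℕ) (F : Set (EuclideanSpace ℝ (Fin n)))
    (f : EuclideanSpace ℝ (Fin n) → EuclideanSpace ℝ (Fin m))
    (c₁ c₂ : ℝ) (hc₁ : 0 < c₁)
    (hbi : ∀ x ∈ F, ∀ y ∈ F,
      c₁ * dist x y ≤ dist (f x) (f y) ∧ dist (f x) (f y) ≤ c₂ * dist x y)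
    (θ : ℝ) (hθ : θ ∈ Set.Icc (0:ℝ) 1) :
    lowerInterDim θ (f '' F) = lowerInterDim θ F ∧
    upperInterDim θ (f '' F) = upperInterDim θ F := by
  rcases F.subsingleton_or_nontrivial with hF | hF
  · rw [hF.lowerInterDim_eq_zero, (hF.image f).lowerInterDim_eq_zero,
      hF.upperInterDim_eq_zero, (hF.image f).upperInterDim_eq_zero]
    exact ⟨rfl, rfl⟩
  have hinj : InjOn f F := fun x hx y hy hxy => by
    have h := (hbi x hx y hy).1
    rw [hxy, dist_self] at h
    exact dist_le_zero.1 (nonpos_of_mul_nonpos_right h hc₁)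
  have := Set.nontrivial_of_nontrivial hF
  have := Set.nontrivial_of_nontrivial (hF.image_of_injOn hinj)
  have hf : LipschitzOnWith c₂.toNNReal f F := .of_dist_le_mul fun x hx y hy =>
    (hbi x hx y hy).2.trans (by gcongr; exact c₂.le_coe_toNNReal)
  have hg := lipschitzOnWith_invFunOn hc₁ fun x hx y hy => (hbi x hx y hy).1
  have hgf : invFunOn f F '' (f '' F) = F := hinj.invFunOn_image subset_rfl
  have hlower := lowerInterDimSet_subset_image hg hθ
  have hupper := upperInterDimSet_subset_image hg hθ
  rw [hgf] at hlower hupper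
  exact ⟨congrArg sInf (hlower.antisymm (lowerInterDimSet_subset_image hf hθ)),
    congrArg sInf (hupper.antisymm (upperInterDimSet_subset_image hf hθ))⟩

theorem stmt5 (n m : ℕ) (F : Set (EuclideanSpace ℝ (Fin n)))
    (hF : Bornology.IsBounded F)
    (f : EuclideanSpace ℝ (Fin n) → EuclideanSpace ℝ (Fin m))
    (c₁ c₂ : ℝ) (hc₁ : 0 < c₁) (hc₁₂ : c₁ ≤ c₂)
    (hbi : ∀ x ∈ F, ∀ y ∈ F,
      c₁ * dist x y ≤ dist (f x) (f y) ∧ dist (f x) (f y) ≤ c₂ * dist x y)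
    (θ : ℝ) (hθ : θ ∈ Set.Icc (0:ℝ) 1) :
    lowerInterDim θ (f '' F) = lowerInterDim θ F ∧
    upperInterDim θ (f '' F) = upperInterDim θ F :=
  stmt5_general n m F f c₁ c₂ hc₁ hbi θ hθ
end

section
/- Let F ⊆ ℝⁿ be bounded and 0 < θ < φ ≤ 1. Then the upper φ-intermediate dimension of F is at most (φ/θ) times the upper θ-intermediate dimension of F, and similarly for lower intermediate dimensions. -/
/-!
A `θ`-cover at scale `δ ≤ 1` is turned into a `φ`-cover at the same scale: put `r = δ^(1/φ)`,
keep the sets of diameter at least `r`, and replace each smaller set `U` by the balls of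
diameter `r` obtained by rescaling a fixed finite `1/2`-net of the unit ball to a ball of
radius `r` around a point of `U`. With `t = (φ/θ) s` one has `r^t = (δ^(1/θ))^s ≤ diam U ^ s`,
and `diam U ^ t ≤ diam U ^ s` when `diam U ≤ 1`, so the `t`-sum is at most a constant
(depending only on the space) times the `s`-sum. Hence every exponent admissible for `θ`
gives the admissible exponent `(φ/θ) s` for `φ`, for the upper and the lower dimension alike.
-/

open Set Metric MeasureTheory ENNReal

open scoped Pointwise in
theorem Real.sInf_le_mul_sInf {c : ℝ} (hc : 0 ≤ c) {A B : Set ℝ} (hB : BddBelow B)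
    (hAB : ∀ s ∈ A, c * s ∈ B) (hBA : B ⊆ A) : sInf B ≤ c * sInf A := by
  rcases A.eq_empty_or_nonempty with rfl | hA
  · simp [subset_empty_iff.1 hBA]
  · calc sInf B ≤ sInf (c • A) := csInf_le_csInf hB hA.smul_set (by
          rintro _ ⟨s, hs, rfl⟩; exact hAB s hs)
      _ = c * sInf A := Real.sInf_smul_of_nonneg hc A

theorem interCoverSum.of_theta_le {X : Type*} [PseudoMetricSpace X] {θ φ δ s ε : ℝ} {F : Set X}
    (hθ : 0 < θ) (hθφ : θ ≤ φ) (hδ : 0 < δ) (hδ1 : δ ≤ 1) (h : interCoverSum φ δ s ε F) :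
    interCoverSum θ δ s ε F := by
  obtain ⟨𝒰, h𝒰c, hcov, hdiam, hsum⟩ := h
  refine ⟨𝒰, h𝒰c, hcov, fun U hU => ⟨(hdiam U hU).1, fun _ => le_trans ?_ ((hdiam U hU).2 ?_)⟩,
    hsum⟩
  · exact ENNReal.ofReal_le_ofReal
      (Real.rpow_le_rpow_of_exponent_ge hδ hδ1 (one_div_le_one_div_of_le hθ hθφ))
  · exact (hθ.trans_le hθφ).ne'

section NormedSpace

variable {E : Type*} [NormedAddCommGroup E] [NormedSpace ℝ E]

theorem exists_finset_closedBall_subset_iUnion_closedBall_half [ProperSpace E] :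
    ∃ T : Finset E, ∀ (x : E) (r : ℝ), 0 < r →
      closedBall x r ⊆ ⋃ y ∈ T, closedBall (x + r • y) (r / 2) := by
  obtain ⟨t, ht, hcov⟩ :=
    totallyBounded_iff.1 (isCompact_closedBall (0 : E) 1).totallyBounded (1 / 2) (by norm_num)
  refine ⟨ht.toFinset, fun x r hr u hu => ?_⟩
  have hz : r⁻¹ • (u - x) ∈ closedBall (0 : E) 1 := by
    rw [mem_closedBall_zero_iff, norm_smul, norm_inv, Real.norm_of_nonneg hr.le,
      inv_mul_le_one₀ hr, ← dist_eq_norm]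
    exact hu
  obtain ⟨y, hyt, hy⟩ := mem_iUnion₂.1 (hcov hz)
  refine mem_iUnion₂.2 ⟨y, ht.mem_toFinset.2 hyt, ?_⟩
  have hdist : dist u (x + r • y) = r * dist (r⁻¹ • (u - x)) y := by
    have : u - (x + r • y) = r • (r⁻¹ • (u - x) - y) := by
      rw [smul_sub, smul_inv_smul₀ hr.ne']; abel
    rw [dist_eq_norm, this, norm_smul, Real.norm_of_nonneg hr.le, dist_eq_norm]
  rw [mem_closedBall, hdist]
  nlinarith [mem_ball.1 hy]

theorem ediam_closedBall_half [Nontrivial E] (x : E) {r : ℝ} (hr : 0 ≤ r) :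
    ediam (closedBall x (r / 2)) = ENNReal.ofReal r := by
  rw [← ENNReal.ofReal_toReal isBounded_closedBall.ediam_ne_top, ← Metric.diam,
    diam_closedBall_eq x (by positivity)]
  ring_nf

theorem exists_finset_cover_sum_ediam_rpow_le {T : Finset E}
    (hT : ∀ (x : E) (r : ℝ), 0 < r → closedBall x r ⊆ ⋃ y ∈ T, closedBall (x + r • y) (r / 2))
    {U : Set E} (hU : 0 < ediam U) (hU1 : ediam U ≤ 1) {r s t : ℝ} (hr : 0 < r) (hs : 0 ≤ s)
    (hst : s ≤ t) (hrU : ENNReal.ofReal r ^ t ≤ ediam U ^ s) :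
    ∃ 𝒱 : Finset (Set E), U ⊆ ⋃₀ ↑𝒱 ∧
      (∀ V ∈ 𝒱, ENNReal.ofReal r ≤ ediam V ∧ ediam V ≤ max (ediam U) (ENNReal.ofReal r)) ∧
      ∑ V ∈ 𝒱, ediam V ^ t ≤ (T.card + 1) * ediam U ^ s := by
  by_cases hbig : ENNReal.ofReal r ≤ ediam U
  · refine ⟨{U}, by simp, by simpa using hbig, ?_⟩
    rw [Finset.sum_singleton]
    calc ediam U ^ t ≤ ediam U ^ s := ENNReal.rpow_le_rpow_of_exponent_ge hU1 hst
      _ ≤ (T.card + 1) * ediam U ^ s := le_mul_of_one_le_left' le_add_self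
  have hUnt := ediam_pos_iff.1 hU
  have := nontrivial_of_nontrivial hUnt
  obtain ⟨x, hx⟩ := hUnt.nonempty
  have hball : ∀ y, ediam (closedBall (x + r • y) (r / 2)) = ENNReal.ofReal r :=
    fun y => ediam_closedBall_half _ hr.le
  refine ⟨T.image fun y => closedBall (x + r • y) (r / 2), fun u hu => ?_, ?_, ?_⟩
  · have hux : u ∈ closedBall x r :=
      (edist_le_ofReal hr.le).1 ((edist_le_ediam_of_mem hu hx).trans (not_le.1 hbig).le)
    obtain ⟨y, hy, huy⟩ := mem_iUnion₂.1 (hT x r hr hux)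
    exact ⟨_, Finset.mem_coe.2 (Finset.mem_image_of_mem _ hy), huy⟩
  · simp only [Finset.mem_image, forall_exists_index, and_imp]
    rintro V y - rfl
    simp [hball]
  · calc ∑ V ∈ T.image fun y => closedBall (x + r • y) (r / 2), ediam V ^ t
        ≤ (T.image fun y => closedBall (x + r • y) (r / 2)).card • (ENNReal.ofReal r ^ t) := by
          refine Finset.sum_le_card_nsmul _ _ _ ?_
          simp only [Finset.mem_image, forall_exists_index, and_imp]
          rintro V y - rfl
          rw [hball]
      _ ≤ T.card • ediam U ^ s := by gcongr; exact Finset.card_image_le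
      _ ≤ (T.card + 1) * ediam U ^ s := by
          rw [nsmul_eq_mul]; gcongr; exact le_self_add

theorem interCoverSum.rescale {T : Finset E}
    (hT : ∀ (x : E) (r : ℝ), 0 < r → closedBall x r ⊆ ⋃ y ∈ T, closedBall (x + r • y) (r / 2))
    {θ φ δ s ε : ℝ} {F : Set E} (hθ : 0 < θ) (hθφ : θ ≤ φ) (hφ : φ ≤ 1) (hδ : 0 < δ)
    (hδ1 : δ ≤ 1) (hs : 0 ≤ s) (h : interCoverSum θ δ s ε F) :
    interCoverSum φ δ (φ / θ * s) ((T.card + 1) * ε) F := by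
  obtain ⟨𝒰, h𝒰c, hcov, hdiam, hsum⟩ := h
  have hφ0 : 0 < φ := hθ.trans_le hθφ
  set r := δ ^ (1 / φ)
  have hr : 0 < r := Real.rpow_pos_of_pos hδ _
  have hrδ : r ≤ δ := Real.rpow_le_self_of_le_one hδ.le hδ1 ((le_div_iff₀ hφ0).2 (by linarith))
  have hrpow : ENNReal.ofReal r ^ (φ / θ * s) = ENNReal.ofReal (δ ^ (1 / θ)) ^ s := by
    rw [ENNReal.ofReal_rpow_of_pos hr, ENNReal.ofReal_rpow_of_pos (Real.rpow_pos_of_pos hδ _),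
      ← Real.rpow_mul hδ.le, ← Real.rpow_mul hδ.le]
    congr 2
    field_simp
  have hrefine : ∀ U ∈ 𝒰, ∃ 𝒱 : Finset (Set E), U ⊆ ⋃₀ ↑𝒱 ∧
      (∀ V ∈ 𝒱, ENNReal.ofReal r ≤ ediam V ∧ ediam V ≤ max (ediam U) (ENNReal.ofReal r)) ∧
      ∑ V ∈ 𝒱, ediam V ^ (φ / θ * s) ≤ (T.card + 1) * ediam U ^ s := by
    intro U hU
    have hlow := (hdiam U hU).2 hθ.ne'
    refine exists_finset_cover_sum_ediam_rpow_le hT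
      ((ENNReal.ofReal_pos.2 (Real.rpow_pos_of_pos hδ _)).trans_le hlow)
      ((hdiam U hU).1.trans (ENNReal.ofReal_le_one.2 hδ1)) hr hs
      (le_mul_of_one_le_left hs ((one_le_div hθ).2 hθφ)) ?_
    exact hrpow ▸ ENNReal.rpow_le_rpow hlow hs
  choose! 𝒱 h𝒱cov h𝒱diam h𝒱sum using hrefine
  refine ⟨⋃ U ∈ 𝒰, ↑(𝒱 U), h𝒰c.biUnion fun U _ => (𝒱 U).countable_toSet, ?_, ?_, ?_⟩
  · intro x hx
    obtain ⟨U, hU, hxU⟩ := hcov hx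
    obtain ⟨V, hV, hxV⟩ := h𝒱cov U hU hxU
    exact ⟨V, mem_biUnion hU hV, hxV⟩
  · simp only [mem_iUnion₂, Finset.mem_coe]
    rintro V ⟨U, hU, hV⟩
    exact ⟨(h𝒱diam U hU V hV).2.trans (max_le (hdiam U hU).1 (ENNReal.ofReal_le_ofReal hrδ)),
      fun _ => (h𝒱diam U hU V hV).1⟩
  · calc ∑' V : ↥(⋃ U ∈ 𝒰, (𝒱 U : Set (Set E))), ediam (V : Set E) ^ (φ / θ * s)
        ≤ ∑' U : 𝒰, ∑' V : ↥(𝒱 U : Set (Set E)), ediam (V : Set E) ^ (φ / θ * s) :=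
          ENNReal.tsum_biUnion_le_tsum (fun V => ediam V ^ (φ / θ * s)) 𝒰
            fun U => (𝒱 U : Set (Set E))
      _ ≤ ∑' U : 𝒰, (T.card + 1) * ediam (U : Set E) ^ s := by
          gcongr with U
          rw [Finset.tsum_subtype' (𝒱 U) fun V => ediam V ^ (φ / θ * s)]
          exact h𝒱sum U U.2
      _ = (T.card + 1) * ∑' U : 𝒰, ediam (U : Set E) ^ s := ENNReal.tsum_mul_left
      _ ≤ (T.card + 1) * ENNReal.ofReal ε := by gcongr; exact hsum
      _ = ENNReal.ofReal ((T.card + 1) * ε) := by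
          rw [ENNReal.ofReal_mul (by positivity)]
          norm_cast

end NormedSpace

section Dimension

variable {X : Type*} [PseudoMetricSpace X] {θ φ C : ℝ} {F : Set X}

theorem upperInterDim_le_mul_of_rescale (hθ : 0 < θ) (hθφ : θ ≤ φ) (hC : 0 < C)
    (hF : ∀ s ε δ, 0 ≤ s → 0 < δ → δ ≤ 1 →
      interCoverSum θ δ s ε F → interCoverSum φ δ (φ / θ * s) (C * ε) F) :
    upperInterDim φ F ≤ φ / θ * upperInterDim θ F := by
  have hφθ : 0 ≤ φ / θ := div_nonneg (hθ.le.trans hθφ) hθ.le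
  refine Real.sInf_le_mul_sInf hφθ ⟨0, fun s hs => hs.1⟩ ?_ ?_
  · rintro s ⟨hs, hcov⟩
    refine ⟨mul_nonneg hφθ hs, fun ε hε => ?_⟩
    obtain ⟨δ₀, hδ₀, hδ₀cov⟩ := hcov (ε / C) (by positivity)
    refine ⟨min δ₀ 1, by positivity, fun δ hδ hδle => ?_⟩
    have := hF s (ε / C) δ hs hδ (hδle.trans (min_le_right _ _))
      (hδ₀cov δ hδ (hδle.trans (min_le_left _ _)))
    rwa [mul_div_cancel₀ _ hC.ne'] at this
  · rintro s ⟨hs, hcov⟩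
    refine ⟨hs, fun ε hε => ?_⟩
    obtain ⟨δ₀, hδ₀, hδ₀cov⟩ := hcov ε hε
    exact ⟨min δ₀ 1, by positivity, fun δ hδ hδle =>
      (hδ₀cov δ hδ (hδle.trans (min_le_left _ _))).of_theta_le hθ hθφ hδ
        (hδle.trans (min_le_right _ _))⟩

theorem lowerInterDim_le_mul_of_rescale (hθ : 0 < θ) (hθφ : θ ≤ φ) (hC : 0 < C)
    (hF : ∀ s ε δ, 0 ≤ s → 0 < δ → δ ≤ 1 →
      interCoverSum θ δ s ε F → interCoverSum φ δ (φ / θ * s) (C * ε) F) :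
    lowerInterDim φ F ≤ φ / θ * lowerInterDim θ F := by
  have hφθ : 0 ≤ φ / θ := div_nonneg (hθ.le.trans hθφ) hθ.le
  refine Real.sInf_le_mul_sInf hφθ ⟨0, fun s hs => hs.1⟩ ?_ ?_
  · rintro s ⟨hs, hcov⟩
    refine ⟨mul_nonneg hφθ hs, fun ε hε δ₀ hδ₀ => ?_⟩
    obtain ⟨δ, hδ, hδle, hδcov⟩ := hcov (ε / C) (by positivity) (min δ₀ 1) (by positivity)
    refine ⟨δ, hδ, hδle.trans (min_le_left _ _), ?_⟩
    have := hF s (ε / C) δ hs hδ (hδle.trans (min_le_right _ _)) hδcov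
    rwa [mul_div_cancel₀ _ hC.ne'] at this
  · rintro s ⟨hs, hcov⟩
    refine ⟨hs, fun ε hε δ₀ hδ₀ => ?_⟩
    obtain ⟨δ, hδ, hδle, hδcov⟩ := hcov ε hε (min δ₀ 1) (by positivity)
    exact ⟨δ, hδ, hδle.trans (min_le_left _ _),
      hδcov.of_theta_le hθ hθφ hδ (hδle.trans (min_le_right _ _))⟩

end Dimension

theorem stmt6_general (n : ℕ) (F : Set (EuclideanSpace ℝ (Fin n))) (θ φ : ℝ)
    (hθ : 0 < θ) (hθφ : θ < φ) (hφ : φ ≤ 1) :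
    upperInterDim φ F ≤ (φ / θ) * upperInterDim θ F ∧
    lowerInterDim φ F ≤ (φ / θ) * lowerInterDim θ F := by
  obtain ⟨T, hT⟩ := exists_finset_closedBall_subset_iUnion_closedBall_half
    (E := EuclideanSpace ℝ (Fin n))
  have hrescale : ∀ s ε δ, 0 ≤ s → 0 < δ → δ ≤ 1 → interCoverSum θ δ s ε F →
      interCoverSum φ δ (φ / θ * s) ((T.card + 1) * ε) F :=
    fun s ε δ hs hδ hδ1 h => h.rescale hT hθ hθφ.le hφ hδ hδ1 hs
  exact ⟨upperInterDim_le_mul_of_rescale hθ hθφ.le (by positivity) hrescale,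
    lowerInterDim_le_mul_of_rescale hθ hθφ.le (by positivity) hrescale⟩

theorem stmt6 (n : ℕ) (F : Set (EuclideanSpace ℝ (Fin n)))
    (hF : Bornology.IsBounded F) (θ φ : ℝ)
    (hθ : 0 < θ) (hθφ : θ < φ) (hφ : φ ≤ 1) :
    upperInterDim φ F ≤ (φ / θ) * upperInterDim θ F ∧
    lowerInterDim φ F ≤ (φ / θ) * lowerInterDim θ F :=
  stmt6_general n F θ φ hθ hθφ hφ
end

section
/- Let F ⊆ ℝⁿ be bounded with Assouad dimension dim_A F and lower box dimension dim_B F > 0, and let θ ∈ (0,1]. Then the lower θ-intermediate dimension of F is at least θ·(dim_A F)·(dim_B F) / (dim_A F − (1−θ)·dim_B F). -/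
open Set Metric MeasureTheory ENNReal

/-- The Assouad dimension of a set `F` in a metric space. -/
noncomputable def assouadDim {X : Type*} [PseudoMetricSpace X] (F : Set X) : ℝ :=
  sInf {s : ℝ | 0 ≤ s ∧ ∃ C > 0, ∀ x ∈ F, ∀ r R : ℝ, 0 < r → r < R →
    ∃ (N : ℕ) (U : Fin N → Set X),
      (F ∩ Metric.closedBall x R ⊆ ⋃ i, U i) ∧
      (∀ i, EMetric.diam (U i) ≤ ENNReal.ofReal r) ∧
      (N : ℝ) ≤ C * (R / r) ^ s}

/-!
Fix `s` in the defining set of `lowerInterDim θ F`, an Assouad exponent `a` with constant `C`,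
and `b < lowerBoxDim F`. Take a cover of `F` by sets `U` with `δ^(1/θ) ≤ |U| ≤ δ` and
`∑ |U|^s` small, and cover each `U ∩ F` by balls of radius `ρ = δ^m`: one ball if `|U| ≤ ρ`,
and `C (|U|/ρ)^a` balls otherwise. For `m = (a - s)/(a - b)` both kinds of `U` cost
`≲ |U|^s` in the `b`-dimensional count at scale `ρ` as soon as `s/θ ≤ m b`, that is
`s < θ a b / (a - (1 - θ) b)`; this contradicts `b < lowerBoxDim F`. Letting `a ↓ dim_A F`
and `b ↑ dim_B F` gives the bound.
-/

open Filter Topology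

lemma tendsto_mul_rpow_nhdsGT_zero (c : ℝ) {m : ℝ} (hm : 0 < m) :
    Tendsto (fun δ : ℝ => c * δ ^ m) (𝓝[>] 0) (𝓝 0) := by
  have h := ((Real.continuousAt_rpow_const 0 m (Or.inr hm.le)).tendsto.const_mul c).mono_left
    (nhdsWithin_le_nhds (s := Ioi 0))
  rwa [Real.zero_rpow hm.ne', mul_zero] at h

lemma tendsto_mul_rpow_nhdsGT_zero_nhdsGT {c m : ℝ} (hc : 0 < c) (hm : 0 < m) :
    Tendsto (fun δ : ℝ => c * δ ^ m) (𝓝[>] 0) (𝓝[>] 0) :=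
  tendsto_nhdsWithin_of_tendsto_nhds_of_eventually_within _ (tendsto_mul_rpow_nhdsGT_zero c hm)
    (eventually_nhdsWithin_of_forall fun δ (hδ : 0 < δ) =>
      mul_pos hc (Real.rpow_pos_of_pos hδ m))

lemma single_ball_cost_le {θ s b m δ d : ℝ} (hδ : 0 < δ) (hδ1 : δ ≤ 1) (hs : 0 ≤ s)
    (hd : δ ^ (1 / θ) ≤ d) (hmb : s / θ ≤ m * b) : (2 * δ ^ m) ^ b ≤ 2 ^ b * d ^ s := calc
  (2 * δ ^ m) ^ b = 2 ^ b * δ ^ (m * b) := by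
    rw [Real.mul_rpow zero_le_two (by positivity), ← Real.rpow_mul hδ.le]
  _ ≤ 2 ^ b * δ ^ (s / θ) :=
    mul_le_mul_of_nonneg_left (Real.rpow_le_rpow_of_exponent_ge hδ hδ1 hmb) (by positivity)
  _ = 2 ^ b * (δ ^ (1 / θ)) ^ s := by rw [← Real.rpow_mul hδ.le, one_div_mul_eq_div]
  _ ≤ 2 ^ b * d ^ s := by gcongr

lemma assouad_cover_cost_le {s a b m δ d C N : ℝ} (hδ : 0 < δ) (hδ1 : δ ≤ 1)
    (hmd : δ ^ m < d) (hdδ : d ≤ δ) (hsa : s ≤ a) (hma : m * (a - b) ≤ a - s)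
    (hN : N ≤ C * (d / δ ^ m) ^ a) (hC : 0 ≤ C) : N * (2 * δ ^ m) ^ b ≤ C * 2 ^ b * d ^ s := by
  have hρ : 0 < δ ^ m := by positivity
  have hd : 0 < d := hρ.trans hmd
  have hexcess : d ^ (a - s) * δ ^ (m * (b - a)) ≤ 1 := calc
    d ^ (a - s) * δ ^ (m * (b - a)) ≤ δ ^ (a - s) * δ ^ (m * (b - a)) := by
      gcongr
    _ = δ ^ (a - s - m * (a - b)) := by rw [← Real.rpow_add hδ]; ring_nf
    _ ≤ 1 := Real.rpow_le_one hδ.le hδ1 (by linarith)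
  calc N * (2 * δ ^ m) ^ b ≤ C * (d / δ ^ m) ^ a * (2 * δ ^ m) ^ b := by gcongr
    _ = C * 2 ^ b * d ^ s * (d ^ (a - s) * δ ^ (m * (b - a))) := by
      rw [Real.div_rpow hd.le hρ.le, Real.mul_rpow zero_le_two hρ.le, ← Real.rpow_mul hδ.le,
        ← Real.rpow_mul hδ.le, mul_sub, Real.rpow_sub hδ, Real.rpow_sub hd]
      field_simp
    _ ≤ C * 2 ^ b * d ^ s := by
      have : 0 ≤ C * 2 ^ b * d ^ s := by positivity
      nlinarith

section PseudoMetric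

variable {X : Type*} [PseudoMetricSpace X]

def interDimExponents (θ : ℝ) (F : Set X) : Set ℝ :=
  {s | 0 ≤ s ∧ ∀ ε > 0, ∃ᶠ δ in 𝓝[>] 0, interCoverSum θ δ s ε F}

lemma frequently_nhdsGT_zero_iff {p : ℝ → Prop} :
    (∃ᶠ δ in 𝓝[>] 0, p δ) ↔ ∀ δ₀ > 0, ∃ δ, 0 < δ ∧ δ ≤ δ₀ ∧ p δ := by
  simp only [(nhdsGT_basis_Ioc (0 : ℝ)).frequently_iff, mem_Ioc, and_assoc]

lemma lowerInterDim_eq_sInf (θ : ℝ) (F : Set X) :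
    lowerInterDim θ F = sInf (interDimExponents θ F) := by
  simp only [lowerInterDim, interDimExponents, frequently_nhdsGT_zero_iff]

lemma lowerInterDim_nonneg (θ : ℝ) (F : Set X) : 0 ≤ lowerInterDim θ F :=
  Real.sInf_nonneg fun _ hs => hs.1

lemma lowerInterDim_le {θ s : ℝ} {F : Set X} (hs : s ∈ interDimExponents θ F) :
    lowerInterDim θ F ≤ s := by
  rw [lowerInterDim_eq_sInf]
  exact csInf_le ⟨0, fun _ h => h.1⟩ hs

lemma interDimExponents_nonempty_of_pos {θ : ℝ} {F : Set X} (h : 0 < lowerInterDim θ F) :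
    (interDimExponents θ F).Nonempty := by
  rw [nonempty_iff_ne_empty]
  intro he
  rw [lowerInterDim_eq_sInf, he, Real.sInf_empty] at h
  exact h.false

lemma lowerInterDim_empty (θ : ℝ) : lowerInterDim θ (∅ : Set X) = 0 := by
  refine le_antisymm (lowerInterDim_le ⟨le_rfl, fun ε hε => .of_forall fun δ => ?_⟩)
    (lowerInterDim_nonneg θ _)
  exact ⟨∅, countable_empty, empty_subset _, by simp, by simp⟩

lemma nonempty_of_lowerInterDim_pos {θ : ℝ} {F : Set X} (h : 0 < lowerInterDim θ F) :
    F.Nonempty := by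
  rw [nonempty_iff_ne_empty]
  rintro rfl
  rw [lowerInterDim_empty] at h
  exact h.false

lemma nontrivial_of_lowerInterDim_pos {θ : ℝ} {F : Set X} (hθ : θ ≠ 0)
    (h : 0 < lowerInterDim θ F) : Nontrivial X := by
  obtain ⟨x, hx⟩ := nonempty_of_lowerInterDim_pos h
  obtain ⟨s, -, hs⟩ := interDimExponents_nonempty_of_pos h
  obtain ⟨δ, ⟨𝒰, -, hcov, hdiam, -⟩, hδ⟩ :=
    ((hs 1 one_pos).and_eventually self_mem_nhdsWithin).exists
  obtain ⟨U, hU, -⟩ := hcov hx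
  by_contra hX
  rw [not_nontrivial_iff_subsingleton] at hX
  have hlow : ENNReal.ofReal (δ ^ (1 / θ)) ≤ 0 :=
    ((hdiam U hU).2 hθ).trans_eq (ediam_subsingleton Set.subsingleton_of_subsingleton)
  rw [nonpos_iff_eq_zero, ENNReal.ofReal_eq_zero] at hlow
  exact (Real.rpow_pos_of_pos hδ _).not_ge hlow

lemma interCoverSum_of_le {θ θ' δ s ε : ℝ} {F : Set X} (hθ : 0 < θ) (hθθ' : θ ≤ θ')
    (hδ : 0 < δ) (hδ1 : δ ≤ 1) (h : interCoverSum θ' δ s ε F) : interCoverSum θ δ s ε F := by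
  obtain ⟨𝒰, h𝒰, hcov, hdiam, hsum⟩ := h
  refine ⟨𝒰, h𝒰, hcov, fun U hU => ⟨(hdiam U hU).1, fun _ => le_trans ?_
    ((hdiam U hU).2 (hθ.trans_le hθθ').ne')⟩, hsum⟩
  exact ENNReal.ofReal_le_ofReal
    (Real.rpow_le_rpow_of_exponent_ge hδ hδ1 (one_div_le_one_div_of_le hθ hθθ'))

lemma interDimExponents_anti {θ θ' : ℝ} {F : Set X} (hθ : 0 < θ) (hθθ' : θ ≤ θ') :
    interDimExponents θ' F ⊆ interDimExponents θ F := fun _ ⟨hs0, hs⟩ =>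
  ⟨hs0, fun ε hε => ((hs ε hε).and_eventually (Ioc_mem_nhdsGT one_pos)).mono
    fun _ ⟨h, hδ, hδ1⟩ => interCoverSum_of_le hθ hθθ' hδ hδ1 h⟩

def HasAssouadBound (F : Set X) (C s : ℝ) : Prop :=
  ∀ x ∈ F, ∀ r R : ℝ, 0 < r → r < R →
    ∃ (N : ℕ) (U : Fin N → Set X),
      (F ∩ closedBall x R ⊆ ⋃ i, U i) ∧
      (∀ i, ediam (U i) ≤ ENNReal.ofReal r) ∧
      (N : ℝ) ≤ C * (R / r) ^ s

lemma assouadDim_eq_sInf (F : Set X) :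
    assouadDim F = sInf {s | 0 ≤ s ∧ ∃ C > 0, HasAssouadBound F C s} := rfl

lemma assouadDim_nonneg (F : Set X) : 0 ≤ assouadDim F :=
  Real.sInf_nonneg fun _ hs => hs.1

lemma subset_closedBall_of_ediam_le {U : Set X} {x : X} {r : ℝ} (hr : 0 ≤ r) (hx : x ∈ U)
    (hU : ediam U ≤ ENNReal.ofReal r) : U ⊆ closedBall x r := fun _ hy =>
  (edist_le_ofReal hr).1 ((edist_le_ediam_of_mem hy hx).trans hU)

lemma HasAssouadBound.exists_ballCover {F : Set X} {C s r R : ℝ} {x : X}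
    (hA : HasAssouadBound F C s) (hx : x ∈ F) (hr : 0 < r) (hrR : r < R) :
    ∃ (N : ℕ) (c : Fin N → X),
      F ∩ closedBall x R ⊆ ⋃ i, closedBall (c i) r ∧ (N : ℝ) ≤ C * (R / r) ^ s := by
  obtain ⟨N, U, hcov, hdiam, hN⟩ := hA x hx r R hr hrR
  have hball : ∀ i, ∃ c, U i ⊆ closedBall c r := fun i =>
    (U i).eq_empty_or_nonempty.elim (fun h => ⟨x, h ▸ empty_subset _⟩)
      fun ⟨y, hy⟩ => ⟨y, subset_closedBall_of_ediam_le hr.le hy (hdiam i)⟩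
  choose c hc using hball
  exact ⟨N, c, hcov.trans (iUnion_mono hc), hN⟩

lemma exists_ballCover_inter {F U : Set X} {θ s a b C m δ : ℝ} (hs : 0 ≤ s) (hC : 0 ≤ C)
    (hA : HasAssouadBound F C a) (hδ : 0 < δ) (hδ1 : δ ≤ 1)
    (hUδ : ediam U ≤ ENNReal.ofReal δ) (hUθ : ENNReal.ofReal (δ ^ (1 / θ)) ≤ ediam U)
    (hmb : s / θ ≤ m * b) (hma : m * (a - b) ≤ a - s) (hsa : s ≤ a) :
    ∃ (N : ℕ) (c : Fin N → X), U ∩ F ⊆ ⋃ i, closedBall (c i) (δ ^ m) ∧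
      (N : ℝ≥0∞) * ENNReal.ofReal ((2 * δ ^ m) ^ b) ≤
        ENNReal.ofReal ((1 + C) * 2 ^ b) * ediam U ^ s := by
  rcases (U ∩ F).eq_empty_or_nonempty with hUF | ⟨x, hxU, hxF⟩
  · exact ⟨0, Fin.elim0, fun _ hy => (hUF.subset hy).elim, by simp⟩
  have hUb : Bornology.IsBounded U :=
    isBounded_iff_ediam_ne_top.2 (ne_top_of_le_ne_top ENNReal.ofReal_ne_top hUδ)
  have hUd : ediam U = ENNReal.ofReal (diam U) := (ENNReal.ofReal_toReal hUb.ediam_ne_top).symm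
  rw [hUd, ENNReal.ofReal_le_ofReal_iff hδ.le] at hUδ
  rw [hUd, ENNReal.ofReal_le_ofReal_iff diam_nonneg] at hUθ
  have hd : 0 < diam U := (Real.rpow_pos_of_pos hδ _).trans_le hUθ
  rw [hUd, ENNReal.ofReal_rpow_of_pos hd, ← ENNReal.ofReal_mul (by positivity)]
  rcases le_or_gt (diam U) (δ ^ m) with hsmall | hlarge
  · refine ⟨1, fun _ => x, fun y hy => mem_iUnion.2 ⟨0, ?_⟩, ?_⟩
    · exact mem_closedBall.2 ((dist_le_diam_of_mem hUb hy.1 hxU).trans hsmall)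
    · rw [Nat.cast_one, one_mul]
      refine ENNReal.ofReal_le_ofReal ((single_ball_cost_le hδ hδ1 hs hUθ hmb).trans ?_)
      rw [mul_assoc]
      exact le_mul_of_one_le_left (by positivity) (by linarith)
  · obtain ⟨N, c, hcov, hN⟩ := hA.exists_ballCover hxF (by positivity) hlarge
    refine ⟨N, c, fun y hy => hcov ⟨hy.2, mem_closedBall.2 (dist_le_diam_of_mem hUb hy.1 hxU)⟩, ?_⟩
    rw [← ENNReal.ofReal_natCast, ← ENNReal.ofReal_mul (Nat.cast_nonneg _)]
    exact ENNReal.ofReal_le_ofReal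
      ((assouad_cover_cost_le hδ hδ1 hlarge hUδ hsa hma hN hC).trans (by gcongr; linarith))

end PseudoMetric

section Normed

variable {E : Type*} [NormedAddCommGroup E] [NormedSpace ℝ E] [Nontrivial E]

lemma ediam_closedBall_eq (x : E) {r : ℝ} (hr : 0 ≤ r) :
    ediam (closedBall x r) = ENNReal.ofReal (2 * r) := by
  rw [← diam_closedBall_eq x hr, Metric.diam,
    ENNReal.ofReal_toReal isBounded_closedBall.ediam_ne_top]

lemma interCoverSum_one_of_ballCover {ι : Type*} [Countable ι] {F : Set E} (c : ι → E)
    {ρ b ε : ℝ} (hρ : 0 < ρ) (hcov : F ⊆ ⋃ i, closedBall (c i) ρ)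
    (hsum : ∑' _ : ι, ENNReal.ofReal ((2 * ρ) ^ b) ≤ ENNReal.ofReal ε) :
    interCoverSum 1 (2 * ρ) b ε F := by
  have hdiam : ∀ i, ediam (closedBall (c i) ρ) = ENNReal.ofReal (2 * ρ) := fun i =>
    ediam_closedBall_eq (c i) hρ.le
  refine ⟨range fun i => closedBall (c i) ρ, countable_range _, ?_, ?_, ?_⟩
  · simpa only [sUnion_range] using hcov
  · rintro _ ⟨i, rfl⟩
    refine ⟨(hdiam i).le, fun _ => ?_⟩
    rw [div_one, Real.rpow_one]
    exact (hdiam i).ge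
  · calc ∑' U : range (fun i => closedBall (c i) ρ), ediam (U : Set E) ^ b
        = ∑' U : range (fun i => closedBall (c i) ρ), ENNReal.ofReal ((2 * ρ) ^ b) := by
          refine tsum_congr ?_
          rintro ⟨_, i, rfl⟩
          rw [hdiam i, ENNReal.ofReal_rpow_of_pos (by positivity)]
      _ ≤ ∑' _ : ι, ENNReal.ofReal ((2 * ρ) ^ b) :=
          ENNReal.tsum_comp_le_tsum_of_injective (rangeSplitting_injective _) _
      _ ≤ ENNReal.ofReal ε := hsum

/-- At scale `δ` the Assouad bound covers `F ⊆ B(x, R)` by `C (2R/δ)^s` balls, of total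
`b`-cost `C (2R)^s δ^(b-s) → 0` for `b > s`. -/
lemma lowerBoxDim_le_of_hasAssouadBound {F : Set E} {C s : ℝ} (hF : Bornology.IsBounded F)
    (hs : 0 ≤ s) (hA : HasAssouadBound F C s) : lowerBoxDim F ≤ s := by
  rcases F.eq_empty_or_nonempty with rfl | ⟨x, hx⟩
  · rw [lowerBoxDim, lowerInterDim_empty]
    exact hs
  obtain ⟨R, hR, hFR⟩ := hF.subset_closedBall_lt 0 x
  refine le_of_forall_gt_imp_ge_of_dense fun b hb => lowerInterDim_le ⟨hs.trans hb.le, ?_⟩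
  intro ε hε
  have hcost := tendsto_mul_rpow_nhdsGT_zero (C * (2 * R) ^ s) (sub_pos.2 hb)
  have hδR : ∀ᶠ δ in 𝓝[>] (0 : ℝ), δ < 2 * R :=
    (eventually_lt_nhds (by positivity)).filter_mono nhdsWithin_le_nhds
  refine Eventually.frequently ?_
  filter_upwards [self_mem_nhdsWithin, hcost.eventually (gt_mem_nhds hε), hδR]
    with δ (hδ : 0 < δ) hcostδ hδR
  obtain ⟨N, c, hcov, hN⟩ := hA.exists_ballCover (R := R) hx (half_pos hδ) (by linarith)
  rw [inter_eq_left.2 hFR] at hcov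
  have hNcost : (N : ℝ) * δ ^ b ≤ ε := calc
    (N : ℝ) * δ ^ b ≤ C * (R / (δ / 2)) ^ s * δ ^ b := by gcongr
    _ = C * (2 * R) ^ s * δ ^ (b - s) := by
      rw [Real.rpow_sub hδ, div_div_eq_mul_div, Real.div_rpow (by positivity) hδ.le]
      field_simp
    _ ≤ ε := hcostδ.le
  have h2δ : 2 * (δ / 2) = δ := by ring
  have hcover := interCoverSum_one_of_ballCover c (half_pos hδ) hcov (b := b) (ε := ε) ?_
  · rwa [h2δ] at hcover
  rw [h2δ, ENNReal.tsum_const, ENat.card_eq_coe_fintype_card, Fintype.card_fin, ENat.toENNReal_coe,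
    ← ENNReal.ofReal_natCast, ← ENNReal.ofReal_mul (Nat.cast_nonneg _)]
  exact ENNReal.ofReal_le_ofReal hNcost

lemma lowerBoxDim_le_of_mem_interDimExponents {F : Set E} {θ s a b C m : ℝ} (hθ : 0 < θ)
    (hs : s ∈ interDimExponents θ F) (hb : 0 ≤ b) (hC : 0 ≤ C) (hA : HasAssouadBound F C a)
    (hm : 0 < m) (hmb : s / θ ≤ m * b) (hma : m * (a - b) ≤ a - s) (hsa : s ≤ a) :
    lowerBoxDim F ≤ b := by
  refine lowerInterDim_le ⟨hb, fun ε hε => ?_⟩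
  have hc : 0 < (1 + C) * 2 ^ b := by positivity
  refine (tendsto_mul_rpow_nhdsGT_zero_nhdsGT two_pos hm).frequently ?_
  refine ((hs.2 (ε / ((1 + C) * 2 ^ b)) (div_pos hε hc)).and_eventually
    (Ioc_mem_nhdsGT one_pos)).mono ?_
  rintro δ ⟨⟨𝒰, h𝒰, hF𝒰, h𝒰diam, h𝒰sum⟩, hδ, hδ1⟩
  have := h𝒰.to_subtype
  choose N c hcov hcost using fun U : 𝒰 => exists_ballCover_inter hs.1 hC hA hδ hδ1
    (h𝒰diam U U.2).1 ((h𝒰diam U U.2).2 hθ.ne') hmb hma hsa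
  refine interCoverSum_one_of_ballCover (fun p : Σ U : 𝒰, Fin (N U) => c p.1 p.2)
    (Real.rpow_pos_of_pos hδ m) (fun x hx => ?_) ?_
  · obtain ⟨U, hU, hxU⟩ := hF𝒰 hx
    obtain ⟨i, hi⟩ := mem_iUnion.1 (hcov ⟨U, hU⟩ ⟨hxU, hx⟩)
    exact mem_iUnion.2 ⟨⟨⟨U, hU⟩, i⟩, hi⟩
  calc ∑' _ : Σ U : 𝒰, Fin (N U), ENNReal.ofReal ((2 * δ ^ m) ^ b)
      = ∑' U : 𝒰, (N U : ℝ≥0∞) * ENNReal.ofReal ((2 * δ ^ m) ^ b) := by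
        rw [ENNReal.tsum_sigma']
        simp
    _ ≤ ∑' U : 𝒰, ENNReal.ofReal ((1 + C) * 2 ^ b) * ediam (U : Set E) ^ s :=
        ENNReal.tsum_le_tsum hcost
    _ = ENNReal.ofReal ((1 + C) * 2 ^ b) * ∑' U : 𝒰, ediam (U : Set E) ^ s :=
        ENNReal.tsum_mul_left
    _ ≤ ENNReal.ofReal ((1 + C) * 2 ^ b) * ENNReal.ofReal (ε / ((1 + C) * 2 ^ b)) := by
        gcongr
        exact h𝒰sum
    _ = ENNReal.ofReal ε := by
        rw [← ENNReal.ofReal_mul hc.le, mul_div_cancel₀ _ hc.ne']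

end Normed

lemma exists_mem_lt_of_eventually_nhds_sInf {S : Set ℝ} (hS : S.Nonempty) (hSb : BddBelow S)
    {B : ℝ} (hB : 0 < B) {P : ℝ × ℝ → Prop} (hP : ∀ᶠ q in 𝓝 (sInf S, B), P q) :
    ∃ a ∈ S, ∃ b, 0 ≤ b ∧ b < B ∧ P (a, b) := by
  rw [nhds_prod_eq, eventually_prod_iff] at hP
  obtain ⟨pa, hpa, pb, hpb, hP⟩ := hP
  obtain ⟨a, haS, ha⟩ :=
    ((mem_closure_iff_frequently.1 (csInf_mem_closure hS hSb)).and_eventually hpa).exists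
  obtain ⟨b, ⟨hb, hb0⟩, hbB⟩ :=
    ((hpb.and (lt_mem_nhds hB)).and_frequently (frequently_lt_nhds B)).exists
  exact ⟨a, haS, b, hb0.le, hbB, hP ha hb⟩

lemma exists_scale_exponent {θ s a b : ℝ} (hθ : 0 < θ) (hb : 0 ≤ b) (hba : b < a)
    (h : s * (a - (1 - θ) * b) < θ * a * b) :
    ∃ m > 0, s / θ ≤ m * b ∧ m * (a - b) ≤ a - s ∧ s ≤ a := by
  have hab : 0 < a - b := by linarith
  have hsa : s < a := by
    by_contra! has
    have hden : 0 < a - (1 - θ) * b := by nlinarith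
    nlinarith [mul_le_mul_of_nonneg_right has hden.le, mul_pos (hb.trans_lt hba) hab]
  refine ⟨(a - s) / (a - b), div_pos (by linarith) hab, ?_, by rw [div_mul_cancel₀ _ hab.ne'],
    hsa.le⟩
  rw [div_le_iff₀ hθ, div_mul_eq_mul_div, div_mul_eq_mul_div, le_div_iff₀ hab]
  nlinarith

theorem stmt12 (n : ℕ) (F : Set (EuclideanSpace ℝ (Fin n)))
    (hF : Bornology.IsBounded F) (hB : 0 < lowerBoxDim F)
    (θ : ℝ) (hθ : θ ∈ Set.Ioc (0:ℝ) 1) :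
    lowerInterDim θ F ≥
      θ * assouadDim F * lowerBoxDim F / (assouadDim F - (1 - θ) * lowerBoxDim F) := by
  obtain ⟨hθ0, hθ1⟩ := hθ
  have hA0 := assouadDim_nonneg F
  rcases le_or_gt (assouadDim F - (1 - θ) * lowerBoxDim F) 0 with hd | hd
  · exact (div_nonpos_of_nonneg_of_nonpos (by positivity) hd).trans (lowerInterDim_nonneg θ F)
  have := nontrivial_of_lowerInterDim_pos one_ne_zero hB
  have hAne : {s | 0 ≤ s ∧ ∃ C > 0, HasAssouadBound F C s}.Nonempty := by
    rw [nonempty_iff_ne_empty]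
    intro h
    rw [assouadDim_eq_sInf, h, Real.sInf_empty] at hd
    nlinarith
  rw [ge_iff_le, lowerInterDim_eq_sInf]
  refine le_csInf ((interDimExponents_nonempty_of_pos hB).mono (interDimExponents_anti hθ0 hθ1))
    fun s hs => ?_
  rw [div_le_iff₀ hd]
  by_contra! hst
  have hP : ∀ᶠ q : ℝ × ℝ in 𝓝 (assouadDim F, lowerBoxDim F),
      s * (q.1 - (1 - θ) * q.2) < θ * q.1 * q.2 :=
    ContinuousAt.eventually_lt (by fun_prop) (by fun_prop) hst
  obtain ⟨a, ⟨ha0, C, hC, hA⟩, b, hb0, hbB, hab⟩ :=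
    exists_mem_lt_of_eventually_nhds_sInf hAne ⟨0, fun _ h => h.1⟩ hB hP
  have hba : b < a := hbB.trans_le (lowerBoxDim_le_of_hasAssouadBound hF ha0 hA)
  obtain ⟨m, hm, hmb, hma, hsa⟩ := exists_scale_exponent hθ0 hb0 hba hab
  exact hbB.not_ge (lowerBoxDim_le_of_mem_interDimExponents hθ0 hs hb0 hC.le hA hm hmb hma hsa)
end

section
/- For p > 0 let F_p = {0} ∪ {1/k^p : k ∈ ℕ, k ≥ 1} ⊆ ℝ. Then for all θ ∈ [0,1], the lower and upper θ-intermediate dimensions of F_p both equal θ/(p+θ). -/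
open Set Metric MeasureTheory ENNReal

/-! For `θ > 0` and a candidate exponent `s`, put `a = (1 - s + s/θ)/(p + 1)` (`coverExponent`) and
`K ≈ δ^(-a)`. Covering each of the points `k^(-p)`, `k ≤ K`, by an interval of the smallest
admissible length `δ^(1/θ)` and the tail `[0, K^(-p)]` by intervals of length `δ` costs about
`K δ^(s/θ) + K^(-p) δ^(s-1) + δ^s`; the choice of `a` makes both of the first two terms
`δ^(s/θ - a)`, which tends to `0` exactly when `s > θ/(p+θ)`.

Conversely, consecutive points among the first `K` are at least `p K^(-(p+1))` apart, so a set of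
diameter `d ∈ [δ^(1/θ), δ]` contains at most `1 + d K^(p+1)/p ≤ d^s (δ^(-s/θ) + δ^(1-s) K^(p+1)/p)`
of them. Summing over a cover with `∑ d^s ≤ 1` gives `K ≲ δ^(-s/θ)`, which fails for `K ≈ δ^(-a)`
as `δ → 0` when `s < θ/(p+θ)`. For `θ = 0` covers by singletons show that the dimension is `0`. -/

open Filter Topology

lemma csInf_eq_of_Ioi_subset {S : Set ℝ} {d : ℝ} (hsub : Ioi d ⊆ S) (hle : ∀ s ∈ S, d ≤ s) :
    sInf S = d :=
  csInf_eq_of_forall_ge_of_forall_gt_exists_lt ⟨d + 1, hsub (by simp)⟩ hle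
    fun w hw => ⟨(d + w) / 2, hsub (by simp only [mem_Ioi]; linarith), by linarith⟩

lemma interDims_eq_of_eventually {X : Type*} [PseudoMetricSpace X] {θ d : ℝ} {F : Set X}
    (hd : 0 ≤ d)
    (hupper : ∀ s > d, ∀ ε > 0, ∀ᶠ δ in 𝓝[>] 0, interCoverSum θ δ s ε F)
    (hlower : ∀ s, 0 ≤ s → s < d → ∃ ε > 0, ∀ᶠ δ in 𝓝[>] 0, ¬ interCoverSum θ δ s ε F) :
    lowerInterDim θ F = d ∧ upperInterDim θ F = d := by
  set L := {s : ℝ | 0 ≤ s ∧ ∀ ε > 0, ∀ δ₀ > 0, ∃ δ, 0 < δ ∧ δ ≤ δ₀ ∧ interCoverSum θ δ s ε F}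
  set U := {s : ℝ | 0 ≤ s ∧ ∀ ε > 0, ∃ δ₀ > 0, ∀ δ, 0 < δ → δ ≤ δ₀ → interCoverSum θ δ s ε F}
  have hUL : U ⊆ L := by
    rintro s ⟨hs0, hs⟩
    refine ⟨hs0, fun ε hε δ₀ hδ₀ => ?_⟩
    obtain ⟨δ₁, hδ₁, hcov⟩ := hs ε hε
    exact ⟨min δ₀ δ₁, lt_min hδ₀ hδ₁, min_le_left _ _, hcov _ (lt_min hδ₀ hδ₁) (min_le_right _ _)⟩
  have hIoi : Ioi d ⊆ U := by
    refine fun s hs => ⟨hd.trans (le_of_lt hs), fun ε hε => ?_⟩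
    obtain ⟨δ₀, hδ₀, hcov⟩ := mem_nhdsGT_iff_exists_Ioc_subset.1 (hupper s hs ε hε)
    exact ⟨δ₀, hδ₀, fun δ hδ hδδ₀ => hcov ⟨hδ, hδδ₀⟩⟩
  have hLd : ∀ s ∈ L, d ≤ s := by
    rintro s ⟨hs0, hs⟩
    by_contra! hsd
    obtain ⟨ε, hε, hno⟩ := hlower s hs0 hsd
    obtain ⟨δ₀, hδ₀, hno⟩ := mem_nhdsGT_iff_exists_Ioc_subset.1 hno
    obtain ⟨δ, hδ, hδδ₀, hcov⟩ := hs ε hε δ₀ hδ₀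
    exact hno ⟨hδ, hδδ₀⟩ hcov
  exact ⟨csInf_eq_of_Ioi_subset (hIoi.trans hUL) hLd,
    csInf_eq_of_Ioi_subset hIoi fun s hs => hLd s (hUL hs)⟩

lemma interCoverSum_of_cover {X ι : Type*} [PseudoMetricSpace X] [Countable ι] {θ δ s ε : ℝ}
    {F : Set X} (U : ι → Set X) (hcov : F ⊆ ⋃ i, U i)
    (hdiam : ∀ i, ediam (U i) ≤ ENNReal.ofReal δ ∧
      (θ ≠ 0 → ENNReal.ofReal (δ ^ (1 / θ)) ≤ ediam (U i)))
    (hsum : ∑' i, ediam (U i) ^ s ≤ ENNReal.ofReal ε) :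
    interCoverSum θ δ s ε F :=
  ⟨range U, countable_range U, by rwa [sUnion_range], forall_mem_range.2 hdiam,
    (ENNReal.tsum_le_tsum_comp_of_surjective rangeFactorization_surjective _).trans hsum⟩

lemma interCoverSum_zero_of_countable {X : Type*} [PseudoMetricSpace X] {F : Set X}
    (hF : F.Countable) (δ : ℝ) {s : ℝ} (hs : 0 < s) (ε : ℝ) : interCoverSum 0 δ s ε F := by
  have : Countable F := hF.to_subtype
  refine interCoverSum_of_cover (fun x : F => {(x : X)}) (fun x hx => mem_iUnion.2 ⟨⟨x, hx⟩, rfl⟩)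
    (fun x => ⟨by simp, fun h => absurd rfl h⟩) ?_
  simp [ENNReal.zero_rpow_of_pos hs]

open Classical in
lemma natCast_card_le_tsum_card_filter {ι X : Type*} (t : Finset ι) (x : ι → X)
    {𝒰 : Set (Set X)} (h𝒰 : 𝒰.Countable) (hcov : ∀ i ∈ t, x i ∈ ⋃₀ 𝒰) :
    (t.card : ℝ≥0∞) ≤ ∑' U : 𝒰, ((t.filter fun i => x i ∈ (U : Set X)).card : ℝ≥0∞) := by
  let _ : MeasurableSpace ι := ⊤
  have : MeasurableSingletonClass ι := ⟨fun _ => trivial⟩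
  calc (t.card : ℝ≥0∞) = Measure.count (t : Set ι) := (Measure.count_apply_finset t).symm
    _ ≤ Measure.count (⋃ U ∈ 𝒰, ((t.filter fun i => x i ∈ U : Finset ι) : Set ι)) := by
      refine measure_mono fun i hi => ?_
      obtain ⟨U, hU, hxU⟩ := hcov i hi
      exact mem_biUnion hU (by simpa using ⟨hi, hxU⟩)
    _ ≤ ∑' U : 𝒰, Measure.count ((t.filter fun i => x i ∈ (U : Set X) : Finset ι) : Set ι) :=
      measure_biUnion_le _ h𝒰 _
    _ = ∑' U : 𝒰, ((t.filter fun i => x i ∈ (U : Set X)).card : ℝ≥0∞) := by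
      simp only [Measure.count_apply_finset]

lemma natCast_card_le_of_forall_sub_le (S : Finset ℕ) {L : ℝ} (hL : 0 ≤ L)
    (h : ∀ j ∈ S, ∀ k ∈ S, (k : ℝ) - j ≤ L) : (S.card : ℝ) ≤ L + 1 := by
  rcases S.eq_empty_or_nonempty with rfl | hS
  · simp only [Finset.card_empty, CharP.cast_eq_zero]; linarith
  have hsub : S ⊆ Finset.Icc (S.min' hS) (S.max' hS) := fun k hk =>
    Finset.mem_Icc.2 ⟨S.min'_le k hk, S.le_max' k hk⟩
  have hcard := Finset.card_le_card hsub
  rw [Nat.card_Icc] at hcard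
  have hspread := h _ (S.min'_mem hS) _ (S.max'_mem hS)
  have hle := S.min'_le_max' hS
  calc (S.card : ℝ) ≤ ((S.max' hS + 1 - S.min' hS : ℕ) : ℝ) := by exact_mod_cast hcard
    _ = S.max' hS - S.min' hS + 1 := by rw [Nat.cast_sub (by omega)]; push_cast; ring
    _ ≤ L + 1 := by linarith

lemma mul_sub_le_rpow_add_one_mul_sub {p x y : ℝ} (hp : 0 ≤ p) (hx : 0 < x) (hxy : x ≤ y) :
    p * (y - x) ≤ y ^ (p + 1) * (1 / x ^ p - 1 / y ^ p) := by
  have hy : 0 < y := hx.trans_le hxy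
  have hyx : -1 ≤ y / x - 1 := by linarith [(one_le_div hx).2 hxy]
  have bernoulli := one_add_mul_self_le_rpow_one_add hyx (by linarith : 1 ≤ p + 1)
  rw [add_sub_cancel, Real.div_rpow hy.le hx.le, Real.rpow_add_one hx.ne',
    Real.rpow_add_one hy.ne', le_div_iff₀ (by positivity)] at bernoulli
  have key : (1 + (p + 1) * (y / x - 1)) * (x ^ p * x) = (x + (p + 1) * (y - x)) * x ^ p := by
    field_simp
  rw [key] at bernoulli
  rw [Real.rpow_add_one hy.ne']
  field_simp
  linarith

lemma mul_add_one_le_rpow_mul {b d δ s c : ℝ} (hb : 0 < b) (hbd : b ≤ d) (hdδ : d ≤ δ)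
    (hs0 : 0 ≤ s) (hs1 : s ≤ 1) (hc : 0 ≤ c) :
    d * c + 1 ≤ d ^ s * (b ^ (-s) + δ ^ (1 - s) * c) := by
  have hd : 0 < d := hb.trans_le hbd
  have hone : 1 ≤ d ^ s * b ^ (-s) := by
    rw [Real.rpow_neg hb.le, ← div_eq_mul_inv, one_le_div (Real.rpow_pos_of_pos hb s)]
    exact Real.rpow_le_rpow hb.le hbd hs0
  have hdle : d ≤ d ^ s * δ ^ (1 - s) :=
    calc d = d ^ s * d ^ (1 - s) := by rw [← Real.rpow_add hd, add_sub_cancel, Real.rpow_one]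
      _ ≤ d ^ s * δ ^ (1 - s) := by gcongr
  nlinarith [mul_le_mul_of_nonneg_right hdle hc]

lemma exists_lt_floor_add_one_mem_Icc {L δ x : ℝ} (hδ : 0 < δ) (hx0 : 0 ≤ x) (hxL : x ≤ L) :
    ∃ j < ⌊L / δ⌋₊ + 1, x ∈ Icc (j * δ) (j * δ + δ) := by
  have hxδ : 0 ≤ x / δ := by positivity
  refine ⟨⌊x / δ⌋₊, Nat.lt_succ_of_le (Nat.floor_mono (by gcongr)), ?_, ?_⟩
  · exact (le_div_iff₀ hδ).1 (Nat.floor_le hxδ)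
  · have := (div_lt_iff₀ hδ).1 (Nat.lt_floor_add_one (x / δ))
    linarith

lemma ediam_Icc_add (x r : ℝ) : ediam (Icc x (x + r)) = ENNReal.ofReal r := by
  rw [Real.ediam_Icc, add_sub_cancel_left]

noncomputable def coverExponent (p θ s : ℝ) : ℝ := (1 - s + s / θ) / (p + 1)

lemma coverExponent_mul (p θ s : ℝ) (hp : p + 1 ≠ 0) :
    coverExponent p θ s * (p + 1) = 1 - s + s / θ :=
  div_mul_cancel₀ _ hp

lemma div_sub_coverExponent {p θ : ℝ} (s : ℝ) (hθ : θ ≠ 0) (hp : p + 1 ≠ 0) :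
    s / θ - coverExponent p θ s = (s * (p + θ) - θ) / (θ * (p + 1)) := by
  unfold coverExponent
  field_simp
  ring

def reciprocalPowers (p : ℝ) : Set ℝ := insert 0 {x | ∃ k : ℕ, 1 ≤ k ∧ x = 1 / (k : ℝ) ^ p}

lemma reciprocalPowers_countable (p : ℝ) : (reciprocalPowers p).Countable := by
  refine Countable.insert 0 ((countable_range fun k : ℕ => 1 / (k : ℝ) ^ p).mono ?_)
  rintro _ ⟨k, -, rfl⟩
  exact ⟨k, rfl⟩

lemma interCoverSum_reciprocalPowers {p θ δ s ε : ℝ} (hp : 0 ≤ p) (hδ : 0 < δ)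
    (hbδ : δ ^ (1 / θ) ≤ δ) (N : ℕ)
    (hsum : N * (δ ^ (1 / θ)) ^ s + (1 / ((N : ℝ) + 1) ^ p / δ + 1) * δ ^ s ≤ ε) :
    interCoverSum θ δ s ε (reciprocalPowers p) := by
  set b := δ ^ (1 / θ)
  have hb : 0 < b := Real.rpow_pos_of_pos hδ _
  set L := 1 / ((N : ℝ) + 1) ^ p
  have hL : 0 ≤ L := by positivity
  set M := ⌊L / δ⌋₊ + 1
  refine interCoverSum_of_cover (ι := Finset.Icc 1 N ⊕ Fin M)
    (Sum.elim (fun k => Icc (1 / (k : ℝ) ^ p) (1 / (k : ℝ) ^ p + b))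
      fun j => Icc (j * δ) (j * δ + δ)) ?_ ?_ ?_
  · rintro x (rfl | ⟨k, hk, rfl⟩)
    · obtain ⟨j, hj, hx⟩ := exists_lt_floor_add_one_mem_Icc hδ le_rfl hL
      exact mem_iUnion.2 ⟨Sum.inr ⟨j, hj⟩, hx⟩
    by_cases hkN : k ≤ N
    · exact mem_iUnion.2 ⟨Sum.inl ⟨k, Finset.mem_Icc.2 ⟨hk, hkN⟩⟩, left_mem_Icc.2 (by linarith)⟩
    · have hxL : 1 / (k : ℝ) ^ p ≤ L := by
        change _ ≤ 1 / ((N : ℝ) + 1) ^ p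
        gcongr
        exact_mod_cast Nat.succ_le_of_lt (not_le.1 hkN)
      obtain ⟨j, hj, hx⟩ := exists_lt_floor_add_one_mem_Icc hδ (by positivity) hxL
      exact mem_iUnion.2 ⟨Sum.inr ⟨j, hj⟩, hx⟩
  · rintro (k | j)
    · simp only [Sum.elim_inl, ediam_Icc_add]
      exact ⟨ENNReal.ofReal_le_ofReal hbδ, fun _ => le_rfl⟩
    · simp only [Sum.elim_inr, ediam_Icc_add]
      exact ⟨le_rfl, fun _ => ENNReal.ofReal_le_ofReal hbδ⟩
  · have hM : (M : ℝ) ≤ L / δ + 1 := by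
      simp only [M, Nat.cast_add, Nat.cast_one]
      gcongr
      exact Nat.floor_le (by positivity)
    simp only [tsum_fintype, Fintype.sum_sum_type, Sum.elim_inl, Sum.elim_inr, ediam_Icc_add,
      Finset.sum_const, Finset.card_univ, Fintype.card_coe, Fintype.card_fin, Nat.card_Icc,
      add_tsub_cancel_right, nsmul_eq_mul]
    rw [ENNReal.ofReal_rpow_of_pos hb, ENNReal.ofReal_rpow_of_pos hδ,
      ← ENNReal.ofReal_natCast, ← ENNReal.ofReal_natCast, ← ENNReal.ofReal_mul (by positivity),
      ← ENNReal.ofReal_mul (by positivity), ← ENNReal.ofReal_add (by positivity) (by positivity)]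
    refine ENNReal.ofReal_le_ofReal (le_trans ?_ hsum)
    gcongr

lemma eventually_interCoverSum_reciprocalPowers {p θ s ε : ℝ} (hp : 0 < p) (hθ0 : 0 < θ)
    (hθ1 : θ ≤ 1) (hs : θ / (p + θ) < s) (hε : 0 < ε) :
    ∀ᶠ δ in 𝓝[>] 0, interCoverSum θ δ s ε (reciprocalPowers p) := by
  have hs0 : 0 < s := (by positivity : 0 ≤ θ / (p + θ)).trans_lt hs
  set a := coverExponent p θ s
  have ha_mul : a * (p + 1) = 1 - s + s / θ := coverExponent_mul p θ s (by linarith)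
  have hγ : 0 < s / θ - a := by
    rw [div_sub_coverExponent s hθ0.ne' (by linarith)]
    exact div_pos (by linarith [(div_lt_iff₀ (by linarith)).1 hs]) (by positivity)
  have hsmall : ∀ r : ℝ, 0 < r → Tendsto (fun δ : ℝ => δ ^ r) (𝓝[>] 0) (𝓝 0) := fun r hr => by
    simpa [Real.zero_rpow hr.ne'] using
      (Real.continuousAt_rpow_const 0 r (Or.inr hr.le)).tendsto.mono_left nhdsWithin_le_nhds
  have hlim : Tendsto (fun δ : ℝ => 2 * δ ^ (s / θ - a) + δ ^ s) (𝓝[>] 0) (𝓝 0) := by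
    simpa using ((hsmall _ hγ).const_mul 2).add (hsmall s hs0)
  filter_upwards [Ioo_mem_nhdsGT one_pos, hlim.eventually (gt_mem_nhds hε)] with δ ⟨hδ0, hδ1⟩ hδε
  have hbδ : δ ^ (1 / θ) ≤ δ := by
    simpa using Real.rpow_le_rpow_of_exponent_ge hδ0 hδ1.le (one_le_one_div hθ0 hθ1)
  refine interCoverSum_reciprocalPowers hp.le hδ0 hbδ ⌊δ ^ (-a)⌋₊ ?_
  set N := ⌊δ ^ (-a)⌋₊
  have hNhi : (N : ℝ) ≤ δ ^ (-a) := Nat.floor_le (by positivity)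
  have hNlo : δ ^ (-a) ≤ N + 1 := (Nat.lt_floor_add_one _).le
  have hb : (δ ^ (1 / θ)) ^ s = δ ^ (s / θ) := by rw [← Real.rpow_mul hδ0.le]; ring_nf
  have hL : 1 / ((N : ℝ) + 1) ^ p ≤ δ ^ (a * p) :=
    calc 1 / ((N : ℝ) + 1) ^ p ≤ 1 / (δ ^ (-a)) ^ p := by gcongr
      _ = δ ^ (a * p) := by
        rw [← Real.rpow_mul hδ0.le, one_div, ← Real.rpow_neg hδ0.le]; ring_nf
  have hexp1 : δ ^ (-a) * δ ^ (s / θ) = δ ^ (s / θ - a) := by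
    rw [← Real.rpow_add hδ0]; ring_nf
  have hexp2 : δ ^ (a * p) / δ * δ ^ s = δ ^ (s / θ - a) := by
    rw [← Real.rpow_sub_one hδ0.ne', ← Real.rpow_add hδ0]
    congr 1
    linarith
  calc N * (δ ^ (1 / θ)) ^ s + (1 / ((N : ℝ) + 1) ^ p / δ + 1) * δ ^ s
      ≤ δ ^ (-a) * δ ^ (s / θ) + (δ ^ (a * p) / δ + 1) * δ ^ s := by rw [hb]; gcongr
    _ = 2 * δ ^ (s / θ - a) + δ ^ s := by rw [add_mul, one_mul, hexp1, hexp2]; ring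
    _ ≤ ε := hδε.le

open Classical in
lemma natCast_card_filter_mem_le {p : ℝ} (hp : 0 < p) (K : ℕ) {U : Set ℝ} (hU : ediam U ≠ ⊤) :
    (((Finset.Icc 1 K).filter fun k : ℕ => 1 / (k : ℝ) ^ p ∈ U).card : ℝ)
      ≤ diam U * (K ^ (p + 1) / p) + 1 := by
  refine natCast_card_le_of_forall_sub_le _ (by positivity) fun j hj k hk => ?_
  simp only [Finset.mem_filter, Finset.mem_Icc] at hj hk
  rcases le_or_gt k j with hkj | hjk
  · have : (k : ℝ) ≤ j := by exact_mod_cast hkj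
    have : 0 ≤ diam U * (K ^ (p + 1) / p) := by positivity
    linarith
  have hj0 : (0 : ℝ) < j := by exact_mod_cast hj.1.1
  have hjk' : (j : ℝ) ≤ k := by exact_mod_cast hjk.le
  have hgap := mul_sub_le_rpow_add_one_mul_sub hp.le hj0 hjk'
  have hdist : 1 / (j : ℝ) ^ p - 1 / (k : ℝ) ^ p ≤ diam U :=
    (le_abs_self _).trans (dist_le_diam_of_mem' hU hj.2 hk.2)
  have hkK : (k : ℝ) ^ (p + 1) ≤ (K : ℝ) ^ (p + 1) := by gcongr; exact_mod_cast hk.1.2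
  have hnonneg : 0 ≤ 1 / (j : ℝ) ^ p - 1 / (k : ℝ) ^ p := sub_nonneg.2 <|
    one_div_le_one_div_of_le (Real.rpow_pos_of_pos hj0 p) (Real.rpow_le_rpow hj0.le hjk' hp.le)
  rw [mul_div_assoc', le_div_iff₀ hp]
  calc ((k : ℝ) - j) * p = p * (k - j) := by ring
    _ ≤ (k : ℝ) ^ (p + 1) * (1 / (j : ℝ) ^ p - 1 / (k : ℝ) ^ p) := hgap
    _ ≤ (K : ℝ) ^ (p + 1) * diam U := by gcongr
    _ = diam U * K ^ (p + 1) := by ring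

open Classical in
lemma natCast_le_of_interCoverSum {p θ δ s ε : ℝ} (hp : 0 < p) (hθ : 0 < θ) (hδ : 0 < δ)
    (hs0 : 0 ≤ s) (hs1 : s ≤ 1) (hε : 0 ≤ ε)
    (h : interCoverSum θ δ s ε (reciprocalPowers p)) (K : ℕ) :
    (K : ℝ) ≤ ε * ((δ ^ (1 / θ)) ^ (-s) + δ ^ (1 - s) * (K ^ (p + 1) / p)) := by
  obtain ⟨𝒰, h𝒰, hcov, hdiam, hsum⟩ := h
  set B := (δ ^ (1 / θ)) ^ (-s) + δ ^ (1 - s) * (K ^ (p + 1) / p)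
  have hcount : ∀ U ∈ 𝒰, (((Finset.Icc 1 K).filter fun k : ℕ => 1 / (k : ℝ) ^ p ∈ U).card : ℝ≥0∞)
      ≤ ediam U ^ s * ENNReal.ofReal B := by
    intro U hU
    obtain ⟨hUδ, hUb⟩ := hdiam U hU
    have hfin : ediam U ≠ ⊤ := ne_top_of_le_ne_top ENNReal.ofReal_ne_top hUδ
    have hb : δ ^ (1 / θ) ≤ diam U := (ENNReal.ofReal_le_iff_le_toReal hfin).1 (hUb hθ.ne')
    have hd : diam U ≤ δ := ENNReal.toReal_le_of_le_ofReal hδ.le hUδ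
    have hreal := (natCast_card_filter_mem_le hp K hfin).trans
      (mul_add_one_le_rpow_mul (Real.rpow_pos_of_pos hδ _) hb hd hs0 hs1 (by positivity))
    rw [← ENNReal.ofReal_toReal hfin, ENNReal.ofReal_rpow_of_nonneg ENNReal.toReal_nonneg hs0,
      ← ENNReal.ofReal_mul (by positivity), ← ENNReal.ofReal_natCast]
    exact ENNReal.ofReal_le_ofReal hreal
  have hK : (K : ℝ≥0∞) ≤ ENNReal.ofReal (ε * B) :=
    calc (K : ℝ≥0∞) = (Finset.Icc 1 K).card := by simp
      _ ≤ ∑' U : 𝒰, (((Finset.Icc 1 K).filter fun k : ℕ => 1 / (k : ℝ) ^ p ∈ (U : Set ℝ)).card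
            : ℝ≥0∞) :=
        natCast_card_le_tsum_card_filter _ _ h𝒰
          fun k hk => hcov (mem_insert_of_mem _ ⟨k, (Finset.mem_Icc.1 hk).1, rfl⟩)
      _ ≤ ∑' U : 𝒰, ediam (U : Set ℝ) ^ s * ENNReal.ofReal B :=
        ENNReal.tsum_le_tsum fun U => hcount U U.2
      _ = (∑' U : 𝒰, ediam (U : Set ℝ) ^ s) * ENNReal.ofReal B := ENNReal.tsum_mul_right
      _ ≤ ENNReal.ofReal ε * ENNReal.ofReal B := by gcongr; exact hsum
      _ = ENNReal.ofReal (ε * B) := (ENNReal.ofReal_mul hε).symm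
  rw [← ENNReal.ofReal_natCast] at hK
  exact (ENNReal.ofReal_le_ofReal_iff (by positivity)).1 hK

lemma eventually_not_interCoverSum_reciprocalPowers {p θ s : ℝ} (hp : 0 < p) (hθ : 0 < θ)
    (hs0 : 0 ≤ s) (hs : s < θ / (p + θ)) :
    ∀ᶠ δ in 𝓝[>] 0, ¬ interCoverSum θ δ s 1 (reciprocalPowers p) := by
  have hs1 : s < 1 := hs.trans ((div_lt_one (by linarith)).2 (by linarith))
  set a := coverExponent p θ s
  have ha_mul : a * (p + 1) = 1 - s + s / θ := coverExponent_mul p θ s (by linarith)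
  have hsθ : 0 ≤ s / θ := by positivity
  have ha : 0 < a := div_pos (by linarith) (by linarith)
  have hγ : s / θ - a < 0 := by
    rw [div_sub_coverExponent s hθ.ne' (by linarith)]
    exact div_neg_of_neg_of_pos (by linarith [(lt_div_iff₀ (by linarith)).1 hs]) (by positivity)
  set C := 1 + 2 ^ (p + 1) / p
  filter_upwards [Ioo_mem_nhdsGT one_pos,
    (tendsto_rpow_neg_nhdsGT_zero hγ).eventually_gt_atTop C] with δ ⟨hδ0, hδ1⟩ hCδ hcover
  set K := ⌈δ ^ (-a)⌉₊
  have hK := natCast_le_of_interCoverSum hp hθ hδ0 hs0 hs1.le zero_le_one hcover K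
  have hδa : 1 ≤ δ ^ (-a) :=
    Real.one_le_rpow_of_pos_of_le_one_of_nonpos hδ0 hδ1.le (by linarith)
  have hKlo : δ ^ (-a) ≤ K := Nat.le_ceil _
  have hKhi : (K : ℝ) ≤ 2 * δ ^ (-a) := by
    linarith [Nat.ceil_lt_add_one (by positivity : 0 ≤ δ ^ (-a))]
  have hb : (δ ^ (1 / θ)) ^ (-s) = δ ^ (-(s / θ)) := by
    rw [← Real.rpow_mul hδ0.le]; ring_nf
  have hKp : (K : ℝ) ^ (p + 1) ≤ 2 ^ (p + 1) * δ ^ (-a * (p + 1)) :=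
    calc (K : ℝ) ^ (p + 1) ≤ (2 * δ ^ (-a)) ^ (p + 1) := by gcongr
      _ = 2 ^ (p + 1) * δ ^ (-a * (p + 1)) := by
        rw [Real.mul_rpow zero_le_two (by positivity), ← Real.rpow_mul hδ0.le]
  have hexp : δ ^ (1 - s) * δ ^ (-a * (p + 1)) = δ ^ (-(s / θ)) := by
    rw [← Real.rpow_add hδ0, neg_mul, ha_mul]; ring_nf
  have hbound : δ ^ (-a) ≤ C * δ ^ (-(s / θ)) :=
    calc δ ^ (-a) ≤ K := hKlo
      _ ≤ 1 * (δ ^ (-(s / θ)) + δ ^ (1 - s) * (K ^ (p + 1) / p)) := hb ▸ hK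
      _ ≤ δ ^ (-(s / θ)) + δ ^ (1 - s) * (2 ^ (p + 1) * δ ^ (-a * (p + 1)) / p) := by
        rw [one_mul]; gcongr
      _ = C * δ ^ (-(s / θ)) := by rw [← hexp]; ring
  have : δ ^ (s / θ - a) ≤ C := by
    rw [show s / θ - a = -a - -(s / θ) by ring, Real.rpow_sub hδ0,
      div_le_iff₀ (Real.rpow_pos_of_pos hδ0 _)]
    exact hbound
  linarith

theorem stmt15 (p : ℝ) (hp : 0 < p) (θ : ℝ) (hθ : θ ∈ Set.Icc (0:ℝ) 1) :
    lowerInterDim θ (insert (0:ℝ) {x | ∃ k : ℕ, 1 ≤ k ∧ x = 1 / (k : ℝ) ^ p})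
        = θ / (p + θ) ∧
    upperInterDim θ (insert (0:ℝ) {x | ∃ k : ℕ, 1 ≤ k ∧ x = 1 / (k : ℝ) ^ p})
        = θ / (p + θ) := by
  obtain ⟨hθ0, hθ1⟩ := hθ
  rcases hθ0.eq_or_lt with rfl | hθ0
  · rw [zero_div]
    exact interDims_eq_of_eventually le_rfl
      (fun s hs ε _ => .of_forall fun δ =>
        interCoverSum_zero_of_countable (reciprocalPowers_countable p) δ hs ε)
      fun s hs0 hs => absurd hs hs0.not_gt
  · exact interDims_eq_of_eventually (by positivity)
      (fun s hs ε hε => eventually_interCoverSum_reciprocalPowers hp hθ0 hθ1 hs hε)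
      fun s hs0 hs => ⟨1, one_pos, eventually_not_interCoverSum_reciprocalPowers hp hθ0 hs0 hs⟩
end
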